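/- arXiv:1405.5097 — 4 statements merged into one kernel-verified Lean document; each statement's English description precedes it below -/
import Mathlib

section
/- The VS(A) estimator θ̂_l = (1/(nB')) Σ_{i=1}^{B'} (1/p_{y_i}) Σ_{u∈U_{y_i}} 1[l ∈ L(u)]/d_u^{(b)} is an unbiased estimator of θ_l, i.e., E[θ̂_l] = θ_l. -/
open MeasureTheory

/- Since every sample has law p, linearity of expectation reduces the claim to a single
sample y. Writing f u = 1[l ∈ L(u)], the importance weight 1/p_v cancels the sampling
probability: E[(1/p_y) Σ_{u ∈ U_y} f u / d_u] = Σ_v Σ_{u ∈ U_v} f u / d_u. Exchanging the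
order of summation, each u is counted once from each of its d_u neighbours, so the double sum
is Σ_u f u = n θ_l. -/

theorem Finset.sum_sum_filter_div_card_filter {α β : Type*} [Fintype α] [Fintype β]
    (r : α → β → Prop) [∀ b, DecidablePred (r · b)] [∀ a, DecidablePred (r a)]
    (hdeg : ∀ a, 0 < (Finset.univ.filter (r a)).card) (f : α → ℝ) :
    ∑ b, ∑ a ∈ Finset.univ.filter (r · b), f a / (Finset.univ.filter (r a)).card
      = ∑ a, f a := by
  rw [Finset.sum_comm' (t' := Finset.univ) (s' := fun a => Finset.univ.filter (r a))
    (by simp)]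
  refine Finset.sum_congr rfl fun a _ => ?_
  have hcard : ((Finset.univ.filter (r a)).card : ℝ) ≠ 0 := by exact_mod_cast (hdeg a).ne'
  rw [Finset.sum_const, nsmul_eq_mul]
  exact mul_div_cancel₀ _ hcard

theorem MeasureTheory.integral_comp_eq_sum_measureReal {Ω V : Type*} [MeasurableSpace Ω]
    [MeasurableSpace V] [Fintype V] [MeasurableSingletonClass V]
    (μ : Measure Ω) [IsFiniteMeasure μ] {X : Ω → V} (hX : Measurable X) (g : V → ℝ) :
    ∫ ω, g (X ω) ∂μ = ∑ v, μ.real {ω | X ω = v} * g v := by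
  rw [← integral_map hX.aemeasurable (measurable_of_countable g).aestronglyMeasurable,
    integral_fintype .of_finite]
  refine Finset.sum_congr rfl fun v _ => ?_
  rw [map_measureReal_apply hX (measurableSet_singleton v), smul_eq_mul]
  rfl

theorem vsA_estimator_unbiased {U V Λ Ω : Type*} [Fintype U] [Fintype V]
    [MeasurableSpace Ω] [MeasurableSpace V] [MeasurableSingletonClass V]
    (μ : Measure Ω) [IsProbabilityMeasure μ]
    (Adj : U → V → Prop)
    [∀ v, DecidablePred (fun u : U => Adj u v)] [∀ u, DecidablePred (fun v : V => Adj u v)]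
    (degb : U → ℕ)
    (hdegb : ∀ u : U, degb u = (Finset.univ.filter (fun v : V => Adj u v)).card)
    (hdeg : ∀ u : U, 0 < degb u)
    (n : ℕ) (hn : n = Fintype.card U) (hn1 : 1 ≤ n)
    (L : U → Set Λ) (l : Λ) [DecidablePred fun u : U => l ∈ L u]
    (θ : ℝ) (hθ : θ = (1 / (n : ℝ)) * ∑ u : U, if l ∈ L u then (1 : ℝ) else 0)
    (p : V → ℝ) (hp : ∀ v, 0 < p v) (hpsum : ∑ v : V, p v = 1)
    (B' : ℕ) (hB' : 0 < B')
    (y : Fin B' → Ω → V) (hmeas : ∀ i, Measurable (y i))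
    (hindep : ProbabilityTheory.iIndepFun y μ)
    (hmarg : ∀ (i : Fin B') (v : V), μ {ω | y i ω = v} = ENNReal.ofReal (p v)) :
    ∫ ω, (1 / ((n : ℝ) * (B' : ℝ))) * ∑ i : Fin B', (1 / p (y i ω)) *
        ∑ u ∈ Finset.univ.filter (fun u : U => Adj u (y i ω)),
          (if l ∈ L u then (1 : ℝ) else 0) / (degb u : ℝ) ∂μ
      = θ := by
  set f : U → ℝ := fun u => if l ∈ L u then 1 else 0
  set g : V → ℝ := fun v => 1 / p v * ∑ u ∈ Finset.univ.filter (Adj · v), f u / degb u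
  have hsample : ∀ i, ∫ ω, g (y i ω) ∂μ = ∑ u, f u := by
    intro i
    have hprob : ∀ v, μ.real {ω | y i ω = v} = p v := fun v => by
      rw [measureReal_def, hmarg, ENNReal.toReal_ofReal (hp v).le]
    rw [integral_comp_eq_sum_measureReal μ (hmeas i) g]
    simp only [hprob, g, one_div, mul_inv_cancel_left₀ (hp _).ne', hdegb]
    exact Finset.sum_sum_filter_div_card_filter Adj (fun u => hdegb u ▸ hdeg u) f
  have hintegrable : ∀ i, Integrable (fun ω => g (y i ω)) μ := fun i =>
    Integrable.comp_measurable (g := g) .of_finite (hmeas i)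
  have hB : (B' : ℝ) ≠ 0 := by exact_mod_cast hB'.ne'
  calc ∫ ω, 1 / ((n : ℝ) * B') * ∑ i, g (y i ω) ∂μ
      = 1 / ((n : ℝ) * B') * ∑ i, ∫ ω, g (y i ω) ∂μ := by
        rw [integral_const_mul, integral_finsetSum _ fun i _ => hintegrable i]
    _ = θ := by
        simp only [hsample, Finset.sum_const, Finset.card_univ, Fintype.card_fin,
          nsmul_eq_mul, hθ]
        field_simp
end

section
/- The distribution π_u = (d_u + α q_u)/(2|E| + α) is the stationary distribution of the RW_T VS_A random walk: Σ_{u∈U} π_u = 1 and Σ_{u∈U} π_u P(u,u') = π_{u'} for every u' ∈ U. -/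
/-! The walk is the simple random walk on the complete weighted graph with symmetric edge weights
`W u u' = α q_u q_u' + A u u'`, whose weighted degrees are `d_u + α q_u`. For any symmetric weights the
walk `P u u' = W u u' / w u` is reversible with respect to the weighted degrees `w`, since
`w u * P u u' = W u u' = W u' u`; summing over `u` gives stationarity of `w` normalised by its total. -/

theorem sum_div_mul_div_row_sum_of_symm {U K : Type*} [Fintype U] [Field K]
    (W : U → U → K) (hW : ∀ u u', W u u' = W u' u)
    (w : U → K) (hw : ∀ u, w u = ∑ u', W u u') (hw0 : ∀ u, w u ≠ 0) (S : K) (u' : U) :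
    ∑ u, w u / S * (W u u' / w u) = w u' / S :=
  calc ∑ u, w u / S * (W u u' / w u) = ∑ u, W u' u / S :=
        Finset.sum_congr rfl fun u _ => by
          rw [hW, div_mul_div_comm, mul_comm (w u), mul_div_mul_right _ _ (hw0 u)]
    _ = w u' / S := by rw [← Finset.sum_div, hw]

theorem rwtvsa_stationary_distribution_general {U : Type*} [Fintype U]
    (A : U → U → ℝ)
    (hAsymm : ∀ u u' : U, A u u' = A u' u)
    (d : U → ℝ) (hd : ∀ u : U, d u = ∑ u' : U, A u u')
    (twoE : ℝ) (htwoE : twoE = ∑ u : U, d u)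
    (α : ℝ) (hden : 0 < twoE + α)
    (q : U → ℝ) (hqsum : ∑ u : U, q u = 1)
    (hpos : ∀ u : U, 0 < d u + α * q u)
    (P : U → U → ℝ)
    (hP : ∀ u u' : U, P u u' = (α * q u * q u' + A u u') / (d u + α * q u))
    (π : U → ℝ) (hπ : ∀ u : U, π u = (d u + α * q u) / (twoE + α)) :
    (∑ u : U, π u = 1) ∧ ∀ u' : U, ∑ u : U, π u * P u u' = π u' := by
  have hW_symm : ∀ u u', α * q u * q u' + A u u' = α * q u' * q u + A u' u := fun u u' => by
    rw [hAsymm u u', mul_right_comm]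
  have hW_row : ∀ u, d u + α * q u = ∑ u', (α * q u * q u' + A u u') := fun u => by
    rw [Finset.sum_add_distrib, ← Finset.mul_sum, hqsum, mul_one, hd, add_comm]
  have htotal : ∑ u, (d u + α * q u) = twoE + α := by
    rw [Finset.sum_add_distrib, ← Finset.mul_sum, hqsum, mul_one, htwoE]
  refine ⟨?_, fun u' => ?_⟩
  · rw [Finset.sum_congr rfl fun u _ => hπ u, ← Finset.sum_div, htotal, div_self hden.ne']
  · simp only [hπ, hP]
    exact sum_div_mul_div_row_sum_of_symm _ hW_symm _ hW_row (fun u => (hpos u).ne') _ u'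

theorem rwtvsa_stationary_distribution {U : Type*} [Fintype U]
    (A : U → U → ℝ)
    (hA01 : ∀ u u' : U, A u u' = 0 ∨ A u u' = 1)
    (hAsymm : ∀ u u' : U, A u u' = A u' u)
    (hAdiag : ∀ u : U, A u u = 0)
    (d : U → ℝ) (hd : ∀ u : U, d u = ∑ u' : U, A u u')
    (twoE : ℝ) (htwoE : twoE = ∑ u : U, d u)
    (α : ℝ) (hα : 0 ≤ α) (hden : 0 < twoE + α)
    (q : U → ℝ) (hq : ∀ u, 0 ≤ q u) (hqsum : ∑ u : U, q u = 1)
    (hpos : ∀ u : U, 0 < d u + α * q u)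
    (P : U → U → ℝ)
    (hP : ∀ u u' : U, P u u' = (α * q u * q u' + A u u') / (d u + α * q u))
    (π : U → ℝ) (hπ : ∀ u : U, π u = (d u + α * q u) / (twoE + α)) :
    (∑ u : U, π u = 1) ∧ ∀ u' : U, ∑ u : U, π u * P u u' = π u' :=
  rwtvsa_stationary_distribution_general A hAsymm d hd twoE htwoE α hden q hqsum hpos P hP π hπ
end

section
/- If the vectors (π_U, π_V, ω_U, w_V) satisfy the RW_T RW_A balance equations π_U = (d_U + ω_U)/(2|E| + α), π_V = (d_V + w_V)/(2|E'| + β), ω_U = α A D_V^{-1} π_V, and w_V = β A^T D_U^{-1} π_U, and if the matrix I − c c' A D_V^{-1} A^T D_U^{-1} is invertible where c = β/(2|E| + α) and c' = α/(2|E'| + β), then ω_U is uniquely determined and equals ω_U = c' (I − c c' A D_V^{-1} A^T D_U^{-1})^{-1} A D_V^{-1} (d_V + c A^T D_U^{-1} d_U). -/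
open Matrix

/- Substituting the balance equation for `w_V` into the one for `ω_U` eliminates the `V`-side
unknowns and leaves the linear fixed-point equation
`ω_U = c' A D_V⁻¹ (d_V + c Aᵀ D_U⁻¹ d_U) + c c' (A D_V⁻¹ Aᵀ D_U⁻¹) ω_U`,
which the invertibility of `I − c c' A D_V⁻¹ Aᵀ D_U⁻¹` solves uniquely. -/

section

variable {R m n : Type*} [CommRing R] [Fintype m] [Fintype n]

theorem eq_add_smul_mul_mulVec_of_coupled (P : Matrix m n R) (Q : Matrix n m R)
    {x dx : m → R} {y dy : n → R} {a b : R}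
    (hx : x = a • (P *ᵥ (dy + y))) (hy : y = b • (Q *ᵥ (dx + x))) :
    x = a • (P *ᵥ (dy + b • (Q *ᵥ dx))) + ((b * a) • (P * Q)) *ᵥ x := by
  conv_lhs => rw [hx, hy]
  simp only [mulVec_add, mulVec_smul, smul_add, smul_mulVec, ← mulVec_mulVec]
  module

theorem eq_nonsing_inv_mulVec_of_eq_add_mulVec [DecidableEq m] {K : Matrix m m R}
    (hK : IsUnit (1 - K)) {x v : m → R} (hx : x = v + K *ᵥ x) :
    x = (1 - K)⁻¹ *ᵥ v := by
  have hv : (1 - K) *ᵥ x = v := by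
    rw [sub_mulVec, one_mulVec]
    exact sub_eq_of_eq_add hx
  rw [← hv, mulVec_mulVec, nonsing_inv_mul _ ((isUnit_iff_isUnit_det _).mp hK), one_mulVec]

end

theorem rwtrwa_omega_formula_general {n n' : ℕ}
    (A : Matrix (Fin n) (Fin n') ℝ)
    (DU : Matrix (Fin n) (Fin n) ℝ)
    (DV : Matrix (Fin n') (Fin n') ℝ)
    (dU : Fin n → ℝ) (dV : Fin n' → ℝ)
    (twoE twoE' : ℝ)
    (α β : ℝ)
    (πU ωU : Fin n → ℝ) (πV wV : Fin n' → ℝ)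
    (hπU : πU = (twoE + α)⁻¹ • (dU + ωU))
    (hπV : πV = (twoE' + β)⁻¹ • (dV + wV))
    (hωU : ωU = α • ((A * DV⁻¹) *ᵥ πV))
    (hwV : wV = β • ((Aᵀ * DU⁻¹) *ᵥ πU))
    (c c' : ℝ) (hc : c = β / (twoE + α)) (hc' : c' = α / (twoE' + β))
    (hinv : IsUnit (1 - (c * c') • (A * DV⁻¹ * Aᵀ * DU⁻¹))) :
    ωU = c' • (((1 - (c * c') • (A * DV⁻¹ * Aᵀ * DU⁻¹))⁻¹ * (A * DV⁻¹)) *ᵥ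
      (dV + c • ((Aᵀ * DU⁻¹) *ᵥ dU))) := by
  have hωU' : ωU = c' • ((A * DV⁻¹) *ᵥ (dV + wV)) := by
    rw [hωU, hπV, mulVec_smul, smul_smul, hc', div_eq_mul_inv]
  have hwV' : wV = c • ((Aᵀ * DU⁻¹) *ᵥ (dU + ωU)) := by
    rw [hwV, hπU, mulVec_smul, smul_smul, hc, div_eq_mul_inv]
  have hfix := eq_add_smul_mul_mulVec_of_coupled _ _ hωU' hwV'
  rw [← Matrix.mul_assoc] at hfix
  rw [← mulVec_mulVec, ← mulVec_smul]
  exact eq_nonsing_inv_mulVec_of_eq_add_mulVec hinv hfix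

theorem rwtrwa_omega_formula {n n' : ℕ}
    (A : Matrix (Fin n) (Fin n') ℝ)
    (hA01 : ∀ u v, A u v = 0 ∨ A u v = 1)
    (dUb : Fin n → ℝ) (hdUb : ∀ u, dUb u = ∑ v, A u v) (hdUbpos : ∀ u, 0 < dUb u)
    (dVb : Fin n' → ℝ) (hdVb : ∀ v, dVb v = ∑ u, A u v) (hdVbpos : ∀ v, 0 < dVb v)
    (DU : Matrix (Fin n) (Fin n) ℝ) (hDU : DU = Matrix.diagonal dUb)
    (DV : Matrix (Fin n') (Fin n') ℝ) (hDV : DV = Matrix.diagonal dVb)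
    (dU : Fin n → ℝ) (dV : Fin n' → ℝ)
    (twoE twoE' : ℝ) (htwoE : twoE = ∑ u, dU u) (htwoE' : twoE' = ∑ v, dV v)
    (α β : ℝ) (hα : 0 < α) (hβ : 0 < β)
    (hden : 0 < twoE + α) (hden' : 0 < twoE' + β)
    (πU ωU : Fin n → ℝ) (πV wV : Fin n' → ℝ)
    (hπU : πU = (twoE + α)⁻¹ • (dU + ωU))
    (hπV : πV = (twoE' + β)⁻¹ • (dV + wV))
    (hωU : ωU = α • ((A * DV⁻¹) *ᵥ πV))
    (hwV : wV = β • ((Aᵀ * DU⁻¹) *ᵥ πU))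
    (c c' : ℝ) (hc : c = β / (twoE + α)) (hc' : c' = α / (twoE' + β))
    (hinv : IsUnit (1 - (c * c') • (A * DV⁻¹ * Aᵀ * DU⁻¹))) :
    ωU = c' • (((1 - (c * c') • (A * DV⁻¹ * Aᵀ * DU⁻¹))⁻¹ * (A * DV⁻¹)) *ᵥ
      (dV + c • ((Aᵀ * DU⁻¹) *ᵥ dU))) :=
  rwtrwa_omega_formula_general A DU DV dU dV twoE twoE' α β πU ωU πV wV hπU hπV hωU hwV c c' hc hc'
    hinv
end

section
/- If the vectors (π_U, π_V, ω_U, w_V) satisfy the RW_T RW_A balance equations π_U = (d_U + ω_U)/(2|E| + α), π_V = (d_V + w_V)/(2|E'| + β), ω_U = α A D_V^{-1} π_V, and w_V = β A^T D_U^{-1} π_U, and if the matrix I − c c' A^T D_U^{-1} A D_V^{-1} is invertible where c = β/(2|E| + α) and c' = α/(2|E'| + β), then w_V is uniquely determined and equals w_V = c (I − c c' A^T D_U^{-1} A D_V^{-1})^{-1} A^T D_U^{-1} (d_U + c' A D_V^{-1} d_V). -/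
open Matrix

/-! Eliminating `π_U` and `π_V` turns the balance equations into the coupled linear system
`w_V = c Aᵀ D_U⁻¹ (d_U + ω_U)`, `ω_U = c' A D_V⁻¹ (d_V + w_V)`. Substituting the second equation
into the first gives `(I − c c' Aᵀ D_U⁻¹ A D_V⁻¹) w_V = c Aᵀ D_U⁻¹ (d_U + c' A D_V⁻¹ d_V)`, which
the invertibility hypothesis solves for `w_V`. -/

namespace Matrix

theorem smul_mulVec_inv_smul {K : Type*} [Field K] {m k : Type*} [Fintype k] (M : Matrix m k K)
    (a s : K) (x : k → K) : a • M *ᵥ (s⁻¹ • x) = (a / s) • M *ᵥ x := by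
  rw [mulVec_smul, smul_smul, div_eq_mul_inv]

variable {R : Type*} [CommRing R] {m k : Type*} [Fintype m] [Fintype k] [DecidableEq k]

theorem one_sub_smul_mul_mulVec_of_coupled {B : Matrix k m R} {C : Matrix m k R}
    {c c' : R} {d ω : m → R} {e w : k → R}
    (hw : w = c • B *ᵥ (d + ω)) (hω : ω = c' • C *ᵥ (e + w)) :
    (1 - (c * c') • (B * C)) *ᵥ w = c • B *ᵥ (d + c' • C *ᵥ e) := by
  rw [sub_mulVec, one_mulVec, smul_mulVec, ← mulVec_mulVec]
  nth_rewrite 1 [hw, hω]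
  simp only [mulVec_add, mulVec_smul, smul_add, smul_smul]
  abel

theorem eq_nonsing_inv_mulVec_of_mulVec_eq {M : Matrix k k R} (hM : IsUnit M) {x y : k → R}
    (h : M *ᵥ x = y) : x = M⁻¹ *ᵥ y := by
  rw [← h, mulVec_mulVec, nonsing_inv_mul _ ((isUnit_iff_isUnit_det M).mp hM), one_mulVec]

end Matrix

theorem rwtrwa_w_formula_general {n n' : ℕ}
    (A : Matrix (Fin n) (Fin n') ℝ)
    (DU : Matrix (Fin n) (Fin n) ℝ)
    (DV : Matrix (Fin n') (Fin n') ℝ)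
    (dU : Fin n → ℝ) (dV : Fin n' → ℝ)
    (twoE twoE' : ℝ)
    (α β : ℝ)
    (πU ωU : Fin n → ℝ) (πV wV : Fin n' → ℝ)
    (hπU : πU = (twoE + α)⁻¹ • (dU + ωU))
    (hπV : πV = (twoE' + β)⁻¹ • (dV + wV))
    (hωU : ωU = α • ((A * DV⁻¹) *ᵥ πV))
    (hwV : wV = β • ((Aᵀ * DU⁻¹) *ᵥ πU))
    (c c' : ℝ) (hc : c = β / (twoE + α)) (hc' : c' = α / (twoE' + β))
    (hinv : IsUnit (1 - (c * c') • (Aᵀ * DU⁻¹ * A * DV⁻¹))) :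
    wV = c • (((1 - (c * c') • (Aᵀ * DU⁻¹ * A * DV⁻¹))⁻¹ * (Aᵀ * DU⁻¹)) *ᵥ
      (dU + c' • ((A * DV⁻¹) *ᵥ dV))) := by
  have hw : wV = c • (Aᵀ * DU⁻¹) *ᵥ (dU + ωU) := by
    rw [hwV, hπU, hc, smul_mulVec_inv_smul]
  have hω : ωU = c' • (A * DV⁻¹) *ᵥ (dV + wV) := by
    rw [hωU, hπV, hc', smul_mulVec_inv_smul]
  have hsys := one_sub_smul_mul_mulVec_of_coupled hw hω
  rw [← Matrix.mul_assoc] at hsys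
  rw [← mulVec_mulVec, ← mulVec_smul]
  exact eq_nonsing_inv_mulVec_of_mulVec_eq hinv hsys

theorem rwtrwa_w_formula {n n' : ℕ}
    (A : Matrix (Fin n) (Fin n') ℝ)
    (hA01 : ∀ u v, A u v = 0 ∨ A u v = 1)
    (dUb : Fin n → ℝ) (hdUb : ∀ u, dUb u = ∑ v, A u v) (hdUbpos : ∀ u, 0 < dUb u)
    (dVb : Fin n' → ℝ) (hdVb : ∀ v, dVb v = ∑ u, A u v) (hdVbpos : ∀ v, 0 < dVb v)
    (DU : Matrix (Fin n) (Fin n) ℝ) (hDU : DU = Matrix.diagonal dUb)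
    (DV : Matrix (Fin n') (Fin n') ℝ) (hDV : DV = Matrix.diagonal dVb)
    (dU : Fin n → ℝ) (dV : Fin n' → ℝ)
    (twoE twoE' : ℝ) (htwoE : twoE = ∑ u, dU u) (htwoE' : twoE' = ∑ v, dV v)
    (α β : ℝ) (hα : 0 < α) (hβ : 0 < β)
    (hden : 0 < twoE + α) (hden' : 0 < twoE' + β)
    (πU ωU : Fin n → ℝ) (πV wV : Fin n' → ℝ)
    (hπU : πU = (twoE + α)⁻¹ • (dU + ωU))
    (hπV : πV = (twoE' + β)⁻¹ • (dV + wV))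
    (hωU : ωU = α • ((A * DV⁻¹) *ᵥ πV))
    (hwV : wV = β • ((Aᵀ * DU⁻¹) *ᵥ πU))
    (c c' : ℝ) (hc : c = β / (twoE + α)) (hc' : c' = α / (twoE' + β))
    (hinv : IsUnit (1 - (c * c') • (Aᵀ * DU⁻¹ * A * DV⁻¹))) :
    wV = c • (((1 - (c * c') • (Aᵀ * DU⁻¹ * A * DV⁻¹))⁻¹ * (Aᵀ * DU⁻¹)) *ᵥ
      (dU + c' • ((A * DV⁻¹) *ᵥ dV))) :=
  rwtrwa_w_formula_general A DU DV dU dV twoE twoE' α β πU ωU πV wV hπU hπV hωU hwV c c' hc hc' hinv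
end
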